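/- Let A be a nonnegative integrable random variable with P(A > 0) > 0, and let G be a standard normal random variable independent of A. For s > 0 define Γ_s = A·exp(s·G − s²/2), and for p ∈ (0,1) let Q_s(p) denote the p-quantile of Γ_s (the generalized inverse of its CDF). Then for every p ∈ (0,1) and all 0 < s₁ ≤ s₂, E[Γ_{s₁}·1{Γ_{s₁} ≤ Q_{s₁}(p)}] ≥ E[Γ_{s₂}·1{Γ_{s₂} ≤ Q_{s₂}(p)}]; that is, the lower partial expectation of Γ_s at level p is nonincreasing in s. -/

import Mathlib

open MeasureTheory ProbabilityTheory Filter Topology Set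

/-! Write `L_s = {Γ_s ≤ Q_s(p)}`. Because `G` is atomless and independent of `A`, the law
of `Γ_{s₂}` has no atom at a positive quantile, so `P(L_{s₂}) ≤ p ≤ P(L_{s₁})`. On `L_{s₂}`
the variable `Γ_{s₂}` lies below the level `Q_{s₂}(p)` and off it above, so swapping `L_{s₂}`
for the larger-mass event `L_{s₁}` can only increase `E[Γ_{s₂}; ·]` (bathtub principle).
Conditionally on `A = a ≥ 0`, the event `L_{s₁}` is `{G ∈ D}` for a lower set `D`, and the
density `exp(sG - s²/2)` tilts `N(0,1)` into `N(s,1)`; hence `E[Γ_s; L_{s₁} | A = a] =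
a·N(s,1)(D)`, which decreases in `s` because `N(s,1)` moves mass upwards. -/

/-- Only meaningful for `0 < p < 1`: otherwise the set is empty or unbounded below and `sInf`
returns the junk value `0`. -/
noncomputable def quantile (μ : Measure ℝ) (p : ℝ) : ℝ := sInf {x | p ≤ cdf μ x}

section Quantile

variable {μ : Measure ℝ} {p : ℝ}

lemma bddBelow_setOf_le_cdf (hp : 0 < p) : BddBelow {x | p ≤ cdf μ x} := by
  obtain ⟨x₀, hx₀⟩ :=
    eventually_atBot.1 ((tendsto_cdf_atBot μ).eventually (eventually_lt_nhds hp))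
  exact ⟨x₀, fun x hx => le_of_not_ge fun h => (hx₀ x h).not_ge hx⟩

lemma nonempty_setOf_le_cdf (hp : p < 1) : {x | p ≤ cdf μ x}.Nonempty :=
  ((tendsto_cdf_atTop μ).eventually (eventually_ge_nhds hp)).exists

lemma cdf_lt_of_lt_quantile (hp : 0 < p) {x : ℝ} (hx : x < quantile μ p) : cdf μ x < p :=
  lt_of_not_ge (notMem_of_lt_csInf (s := {x | p ≤ cdf μ x}) hx (bddBelow_setOf_le_cdf hp))

lemma le_cdf_quantile (hp₀ : 0 < p) (hp₁ : p < 1) : p ≤ cdf μ (quantile μ p) := by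
  have hright : ∀ᶠ x in 𝓝[>] quantile μ p, p ≤ cdf μ x := by
    filter_upwards [self_mem_nhdsWithin] with x hx
    obtain ⟨y, hy, hyx⟩ :=
      (csInf_lt_iff (bddBelow_setOf_le_cdf hp₀) (nonempty_setOf_le_cdf hp₁)).1 hx
    exact hy.trans (monotone_cdf μ hyx.le)
  exact ge_of_tendsto (((cdf μ).right_continuous _).mono Ioi_subset_Ici_self) hright

lemma cdf_quantile_le [IsProbabilityMeasure μ] (hp : 0 < p) (hatom : μ {quantile μ p} = 0) :
    cdf μ (quantile μ p) ≤ p := by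
  have hleft : Function.leftLim (cdf μ) (quantile μ p) ≤ p :=
    le_of_tendsto ((monotone_cdf μ).tendsto_leftLim _)
      (eventually_nhdsWithin_of_forall fun x (hx : x < quantile μ p) =>
        (cdf_lt_of_lt_quantile hp hx).le)
  have hjump := (cdf μ).measure_singleton (quantile μ p)
  rw [measure_cdf, hatom, eq_comm, ENNReal.ofReal_eq_zero, sub_nonpos] at hjump
  exact hjump.trans hleft

lemma quantile_nonneg [IsProbabilityMeasure μ] (hp₀ : 0 < p) (hp₁ : p < 1) (hμ : ∀ᵐ x ∂μ, 0 ≤ x) :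
    0 ≤ quantile μ p := by
  refine le_csInf (nonempty_setOf_le_cdf hp₁) fun x hx => le_of_not_gt fun hneg => ?_
  have hnull : μ (Iic x) = 0 :=
    measure_mono_null (fun y (hy : y ≤ x) (h0 : 0 ≤ y) => hneg.not_ge (h0.trans hy)) (ae_iff.1 hμ)
  have hzero : cdf μ x = 0 := by rw [cdf_eq_real, measureReal_def, hnull, ENNReal.toReal_zero]
  exact hp₀.not_ge (hzero ▸ hx)

end Quantile

section LawOf

variable {Ω : Type*} [MeasurableSpace Ω] {P : Measure Ω} [IsProbabilityMeasure P] {X : Ω → ℝ}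

lemma cdf_map (hX : Measurable X) (x : ℝ) : cdf (P.map X) x = P.real {ω | X ω ≤ x} := by
  have := Measure.isProbabilityMeasure_map (μ := P) hX.aemeasurable
  rw [cdf_eq_real, map_measureReal_apply hX measurableSet_Iic]
  rfl

lemma quantile_map (hX : Measurable X) (p : ℝ) :
    quantile (P.map X) p = sInf {x | p ≤ (P {ω | X ω ≤ x}).toReal} := by
  simp only [quantile, cdf_map hX, measureReal_def]

variable {p : ℝ}

lemma le_measureReal_le_quantile_map (hX : Measurable X) (hp₀ : 0 < p) (hp₁ : p < 1) :
    p ≤ P.real {ω | X ω ≤ quantile (P.map X) p} := by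
  have := Measure.isProbabilityMeasure_map (μ := P) hX.aemeasurable
  rw [← cdf_map hX]
  exact le_cdf_quantile hp₀ hp₁

lemma measureReal_le_quantile_map_le (hX : Measurable X) (hp : 0 < p)
    (hatom : P {ω | X ω = quantile (P.map X) p} = 0) :
    P.real {ω | X ω ≤ quantile (P.map X) p} ≤ p := by
  have := Measure.isProbabilityMeasure_map (μ := P) hX.aemeasurable
  rw [← cdf_map hX]
  exact cdf_quantile_le hp (by rwa [Measure.map_apply hX (measurableSet_singleton _)])

lemma quantile_map_nonneg (hX : Measurable X) (hX₀ : ∀ ω, 0 ≤ X ω) (hp₀ : 0 < p) (hp₁ : p < 1) :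
    0 ≤ quantile (P.map X) p := by
  have := Measure.isProbabilityMeasure_map (μ := P) hX.aemeasurable
  exact quantile_nonneg hp₀ hp₁ ((ae_map_iff hX.aemeasurable measurableSet_Ici).2 (ae_of_all _ hX₀))

end LawOf

section Bathtub

variable {Ω : Type*} [MeasurableSpace Ω] {P : Measure Ω} {Y : Ω → ℝ} {S : Set Ω}

lemma integral_mul_indicator_one (hS : MeasurableSet S) :
    ∫ ω, Y ω * S.indicator (fun _ => (1 : ℝ)) ω ∂P = ∫ ω in S, Y ω ∂P := by
  rw [← integral_indicator hS]
  congr 1 with ω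
  by_cases h : ω ∈ S <;> simp [h]

lemma setIntegral_sublevel_sub_le [IsFiniteMeasure P] (hYm : Measurable Y) (hY : Integrable Y P)
    (hS : MeasurableSet S) (t : ℝ) :
    ∫ ω in {ω | Y ω ≤ t}, (Y ω - t) ∂P ≤ ∫ ω in S, (Y ω - t) ∂P := by
  have hL : MeasurableSet {ω | Y ω ≤ t} := measurableSet_le hYm measurable_const
  rw [← integral_indicator hL, ← integral_indicator hS]
  refine integral_mono ((hY.sub (integrable_const t)).indicator hL)
    ((hY.sub (integrable_const t)).indicator hS) fun ω => ?_
  by_cases hω : Y ω ≤ t <;> by_cases hωS : ω ∈ S <;> simp [hω, hωS]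
  exact (lt_of_not_ge hω).le

lemma setIntegral_sublevel_le [IsFiniteMeasure P] (hYm : Measurable Y) (hY : Integrable Y P)
    (hS : MeasurableSet S) {t : ℝ} (h : t * P.real {ω | Y ω ≤ t} ≤ t * P.real S) :
    ∫ ω in {ω | Y ω ≤ t}, Y ω ∂P ≤ ∫ ω in S, Y ω ∂P := by
  have := setIntegral_sublevel_sub_le hYm hY hS t
  rw [integral_sub hY.integrableOn (integrable_const t), integral_sub hY.integrableOn
    (integrable_const t), setIntegral_const, setIntegral_const, smul_eq_mul, smul_eq_mul] at this
  linarith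

end Bathtub

section Gaussian

lemma integrable_exp_mul_sub_gaussianReal (μ : ℝ) (v : NNReal) (s c : ℝ) :
    Integrable (fun g => Real.exp (s * g - c)) (gaussianReal μ v) := by
  simpa only [Real.exp_sub] using
    (integrable_exp_mul_gaussianReal (μ := μ) (v := v) s).div_const _

lemma withDensity_exp_gaussianReal (s : ℝ) :
    (gaussianReal 0 1).withDensity (fun g => ENNReal.ofReal (Real.exp (s * g - s ^ 2 / 2)))
      = gaussianReal s 1 := by
  rw [gaussianReal_of_var_ne_zero 0 one_ne_zero, gaussianReal_of_var_ne_zero s one_ne_zero,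
    ← withDensity_mul _ (measurable_gaussianPDF 0 1) (by fun_prop)]
  congr 1 with g
  rw [Pi.mul_apply, gaussianPDF, gaussianPDF,
    ← ENNReal.ofReal_mul (gaussianPDFReal_nonneg _ _ _)]
  simp only [gaussianPDFReal, NNReal.coe_one, mul_one, sub_zero, mul_assoc, ← Real.exp_add]
  ring_nf

lemma setIntegral_exp_gaussianReal (s : ℝ) {D : Set ℝ} (hD : MeasurableSet D) :
    ∫ g in D, Real.exp (s * g - s ^ 2 / 2) ∂gaussianReal 0 1 = (gaussianReal s 1).real D := by
  rw [integral_eq_lintegral_of_nonneg_ae (ae_of_all _ fun g => (Real.exp_pos _).le)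
    (by fun_prop), ← withDensity_apply _ hD, withDensity_exp_gaussianReal, measureReal_def]

lemma gaussianReal_le_of_isLowerSet {m₁ m₂ : ℝ} (h : m₁ ≤ m₂) (v : NNReal) {D : Set ℝ}
    (hD : IsLowerSet D) : gaussianReal m₂ v D ≤ gaussianReal m₁ v D := by
  rw [← add_sub_cancel m₁ m₂, ← gaussianReal_map_add_const,
    (measurableEmbedding_addRight _).map_apply]
  exact measure_mono fun g hg => hD (by linarith : g ≤ g + (m₂ - m₁)) hg

end Gaussian

namespace ProbabilityTheory

variable {Ω α β : Type*} [MeasurableSpace Ω] [MeasurableSpace α] [MeasurableSpace β]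
  {P : Measure Ω} [IsFiniteMeasure P] {X : Ω → α} {Y : Ω → β}

lemma IndepFun.integral_comp_eq_integral_integral {E : Type*} [NormedAddCommGroup E]
    [NormedSpace ℝ E] (hXY : IndepFun X Y P) (hX : Measurable X) (hY : Measurable Y)
    {F : α × β → E} (hF : Integrable F ((P.map X).prod (P.map Y))) :
    ∫ ω, F (X ω, Y ω) ∂P = ∫ x, ∫ y, F (x, y) ∂(P.map Y) ∂(P.map X) := by
  have hlaw := hXY.map_prod_eq_prod_map_map hX.aemeasurable hY.aemeasurable
  rw [← integral_prod _ hF, ← hlaw]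
  exact (integral_map (hX.prodMk hY).aemeasurable (hlaw ▸ hF.1)).symm

lemma IndepFun.measure_preimage_eq_zero (hXY : IndepFun X Y P) (hX : Measurable X)
    (hY : Measurable Y) [NullSingletonClass (P.map Y)] {T : Set (α × β)} (hT : MeasurableSet T)
    (hslice : ∀ x, (Prod.mk x ⁻¹' T).Subsingleton) :
    P ((fun ω => (X ω, Y ω)) ⁻¹' T) = 0 := by
  rw [← Measure.map_apply (hX.prodMk hY) hT,
    hXY.map_prod_eq_prod_map_map hX.aemeasurable hY.aemeasurable, Measure.prod_apply hT]
  simp [(hslice _).measure_zero]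

end ProbabilityTheory

section HybridSmoothing

variable {Ω : Type*} [MeasurableSpace Ω] {P : Measure Ω} {A G : Ω → ℝ}

lemma integrable_mul_exp (hAint : Integrable A P) (hG : Measurable G)
    (hlaw : P.map G = gaussianReal 0 1) (hindep : IndepFun A G P) (s c : ℝ) :
    Integrable (fun ω => A ω * Real.exp (s * G ω - c)) P := by
  have hexp : Measurable fun g : ℝ => Real.exp (s * g - c) := by fun_prop
  have hexpG : Integrable (fun ω => Real.exp (s * G ω - c)) P :=
    (integrable_map_measure hexp.aestronglyMeasurable hG.aemeasurable).1
      (hlaw ▸ integrable_exp_mul_sub_gaussianReal 0 1 s c)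
  exact (hindep.comp measurable_id hexp).integrable_mul hAint hexpG

lemma measure_mul_exp_eq_eq_zero [IsFiniteMeasure P] (hA : Measurable A) (hG : Measurable G)
    (hlaw : P.map G = gaussianReal 0 1) (hindep : IndepFun A G P) {s t : ℝ} (hs : s ≠ 0)
    (ht : t ≠ 0) (c : ℝ) : P {ω | A ω * Real.exp (s * G ω - c) = t} = 0 := by
  have : NullSingletonClass (P.map G) := hlaw ▸ nullSingletonClass_gaussianReal one_ne_zero
  refine hindep.measure_preimage_eq_zero hA hG (T := {x | x.1 * Real.exp (s * x.2 - c) = t})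
    (measurableSet_eq_fun (by fun_prop) measurable_const) fun a g₁ h₁ g₂ h₂ => ?_
  have ha : a ≠ 0 := by
    rintro rfl
    exact ht (by simpa using h₁.symm)
  have := Real.exp_injective (mul_left_cancel₀ ha (h₁.trans h₂.symm))
  exact mul_left_cancel₀ hs (by linarith)

lemma isLowerSet_setOf_mul_exp_le {a s : ℝ} (ha : 0 ≤ a) (hs : 0 ≤ s) (c t : ℝ) :
    IsLowerSet {g | a * Real.exp (s * g - c) ≤ t} := fun g₁ g₂ hle (h : _ ≤ t) =>
  show a * Real.exp (s * g₂ - c) ≤ t from le_trans (by gcongr) h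

lemma setIntegral_mul_exp_le_of_isLowerSet [IsFiniteMeasure P] (hA : Measurable A)
    (hAnn : ∀ ω, 0 ≤ A ω) (hAint : Integrable A P) (hG : Measurable G)
    (hlaw : P.map G = gaussianReal 0 1) (hindep : IndepFun A G P) {T : Set (ℝ × ℝ)}
    (hT : MeasurableSet T) (hTlower : ∀ a, 0 ≤ a → IsLowerSet (Prod.mk a ⁻¹' T)) {s s' : ℝ} (hs : s ≤ s') :
    ∫ ω in (fun ω => (A ω, G ω)) ⁻¹' T, A ω * Real.exp (s' * G ω - s' ^ 2 / 2) ∂P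
      ≤ ∫ ω in (fun ω => (A ω, G ω)) ⁻¹' T, A ω * Real.exp (s * G ω - s ^ 2 / 2) ∂P := by
  set F : ℝ → ℝ × ℝ → ℝ := fun r => T.indicator fun x => x.1 * Real.exp (r * x.2 - r ^ 2 / 2)
  have hAlaw : Integrable id (P.map A) :=
    (integrable_map_measure aestronglyMeasurable_id hA.aemeasurable).2 hAint
  have hF : ∀ r, Integrable (F r) ((P.map A).prod (P.map G)) := fun r => by
    rw [hlaw]
    exact (hAlaw.mul_prod (integrable_exp_mul_sub_gaussianReal 0 1 r _)).indicator hT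
  have hfubini : ∀ r,
      ∫ ω in (fun ω => (A ω, G ω)) ⁻¹' T, A ω * Real.exp (r * G ω - r ^ 2 / 2) ∂P
        = ∫ a, ∫ g, F r (a, g) ∂(P.map G) ∂(P.map A) := fun r => by
    rw [← integral_indicator ((hA.prodMk hG) hT),
      ← hindep.integral_comp_eq_integral_integral hA hG (hF r)]
    rfl
  have hslice : ∀ r a,
      ∫ g, F r (a, g) ∂(P.map G) = a * (gaussianReal r 1).real (Prod.mk a ⁻¹' T) := fun r a => by
    rw [hlaw, ← setIntegral_exp_gaussianReal r (measurable_prodMk_left hT),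
      ← integral_const_mul, ← integral_indicator (measurable_prodMk_left hT)]
    rfl
  rw [hfubini, hfubini]
  refine integral_mono_ae (hF s').integral_prod_left (hF s).integral_prod_left ?_
  filter_upwards [(ae_map_iff hA.aemeasurable measurableSet_Ici).2 (ae_of_all _ hAnn)] with a ha
  rw [hslice, hslice]
  exact mul_le_mul_of_nonneg_left (ENNReal.toReal_mono (measure_ne_top _ _)
    (gaussianReal_le_of_isLowerSet hs 1 (hTlower a ha))) ha

end HybridSmoothing

theorem lower_partial_expectation_antitone_in_radius_general
    {Ω : Type*} [MeasurableSpace Ω] (P : Measure Ω) [IsProbabilityMeasure P]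
    (A G : Ω → ℝ)
    (hA : Measurable A) (hAnn : ∀ ω, 0 ≤ A ω) (hAint : Integrable A P)
    (hG : Measurable G) (hlaw : P.map G = gaussianReal 0 1)
    (hindep : IndepFun A G P)
    (Γ : ℝ → Ω → ℝ) (hΓ : Γ = fun s ω => A ω * Real.exp (s * G ω - s ^ 2 / 2))
    (Q : ℝ → ℝ → ℝ)
    (hQ : Q = fun s p => sInf {x : ℝ | p ≤ (P {ω | Γ s ω ≤ x}).toReal})
    (p : ℝ) (hp : p ∈ Set.Ioo (0 : ℝ) 1)
    (s₁ s₂ : ℝ) (hs₁ : 0 < s₁) (hs₁₂ : s₁ ≤ s₂) :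
    ∫ ω, Γ s₂ ω * Set.indicator {ω | Γ s₂ ω ≤ Q s₂ p} (fun _ => (1 : ℝ)) ω ∂P
      ≤ ∫ ω, Γ s₁ ω * Set.indicator {ω | Γ s₁ ω ≤ Q s₁ p} (fun _ => (1 : ℝ)) ω ∂P := by
  obtain ⟨hp₀, hp₁⟩ := hp
  have hΓm : ∀ s, Measurable (Γ s) := fun s => by rw [hΓ]; fun_prop
  have hsub : ∀ s t, MeasurableSet {ω | Γ s ω ≤ t} := fun s t =>
    measurableSet_le (hΓm s) measurable_const
  have hquantile : ∀ s, Q s p = quantile (P.map (Γ s)) p := fun s => by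
    rw [hQ, quantile_map (hΓm s)]
  rw [integral_mul_indicator_one (hsub _ _), integral_mul_indicator_one (hsub _ _), hquantile,
    hquantile]
  set q₁ := quantile (P.map (Γ s₁)) p
  set q₂ := quantile (P.map (Γ s₂)) p
  have hq₂ : 0 ≤ q₂ := quantile_map_nonneg (hΓm s₂)
    (fun ω => by rw [hΓ]; exact mul_nonneg (hAnn ω) (Real.exp_pos _).le) hp₀ hp₁
  calc ∫ ω in {ω | Γ s₂ ω ≤ q₂}, Γ s₂ ω ∂P
      ≤ ∫ ω in {ω | Γ s₁ ω ≤ q₁}, Γ s₂ ω ∂P := by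
        refine setIntegral_sublevel_le (hΓm s₂)
          (by rw [hΓ]; exact integrable_mul_exp hAint hG hlaw hindep _ _) (hsub _ _) ?_
        rcases hq₂.eq_or_lt with hzero | hpos
        · simp [← hzero]
        have hatom : P {ω | Γ s₂ ω = q₂} = 0 := by
          rw [hΓ]
          exact measure_mul_exp_eq_eq_zero hA hG hlaw hindep (hs₁.trans_le hs₁₂).ne' hpos.ne' _
        exact mul_le_mul_of_nonneg_left ((measureReal_le_quantile_map_le (hΓm s₂) hp₀ hatom).trans
          (le_measureReal_le_quantile_map (hΓm s₁) hp₀ hp₁)) hq₂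
    _ ≤ ∫ ω in {ω | Γ s₁ ω ≤ q₁}, Γ s₁ ω ∂P := by
        subst hΓ
        exact setIntegral_mul_exp_le_of_isLowerSet hA hAnn hAint hG hlaw hindep
          (T := {x | x.1 * Real.exp (s₁ * x.2 - s₁ ^ 2 / 2) ≤ q₁})
          (measurableSet_le (by fun_prop) measurable_const)
          (fun a ha => isLowerSet_setOf_mul_exp_le ha hs₁.le (s₁ ^ 2 / 2) q₁) hs₁₂

/-- **Monotonicity in the radius of the lower partial expectation of the hybrid
likelihood ratio.** For a nonnegative integrable `A` with `P(A > 0) > 0` and an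
independent standard normal `G`, set `Γ_s = A·exp(sG − s²/2)` and let `Q_s(p)` be the
`p`-quantile of `Γ_s`. Then for `p ∈ (0,1)` and `0 < s₁ ≤ s₂`,
`E[Γ_{s₁}·1{Γ_{s₁} ≤ Q_{s₁}(p)}] ≥ E[Γ_{s₂}·1{Γ_{s₂} ≤ Q_{s₂}(p)}]`. -/
theorem lower_partial_expectation_antitone_in_radius
    {Ω : Type*} [MeasurableSpace Ω] (P : Measure Ω) [IsProbabilityMeasure P]
    (A G : Ω → ℝ)
    (hA : Measurable A) (hAnn : ∀ ω, 0 ≤ A ω) (hAint : Integrable A P)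
    (hApos : 0 < P {ω | 0 < A ω})
    (hG : Measurable G) (hlaw : P.map G = gaussianReal 0 1)
    (hindep : IndepFun A G P)
    (Γ : ℝ → Ω → ℝ) (hΓ : Γ = fun s ω => A ω * Real.exp (s * G ω - s ^ 2 / 2))
    (Q : ℝ → ℝ → ℝ)
    (hQ : Q = fun s p => sInf {x : ℝ | p ≤ (P {ω | Γ s ω ≤ x}).toReal})
    (p : ℝ) (hp : p ∈ Set.Ioo (0 : ℝ) 1)
    (s₁ s₂ : ℝ) (hs₁ : 0 < s₁) (hs₁₂ : s₁ ≤ s₂) :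
    ∫ ω, Γ s₂ ω * Set.indicator {ω | Γ s₂ ω ≤ Q s₂ p} (fun _ => (1 : ℝ)) ω ∂P
      ≤ ∫ ω, Γ s₁ ω * Set.indicator {ω | Γ s₁ ω ≤ Q s₁ p} (fun _ => (1 : ℝ)) ω ∂P :=
  lower_partial_expectation_antitone_in_radius_general P A G hA hAnn hAint hG hlaw hindep Γ hΓ Q hQ
    p hp s₁ s₂ hs₁ hs₁₂
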